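/- arXiv:2509.20685 — 5 statements merged into one kernel-verified Lean document; each statement's English description precedes it below -/
import Mathlib

section
/- Let k, m be natural numbers and α : Fin m → ℕ with α i ≥ 1 for all i. On the open quadrant Q = {(x,y) ∈ (Fin k → ℝ) × (Fin m → ℝ) : y i > 0 for all i} define τ(x,y) = ∏_i (y i)^(α i), and given a C¹ function f̄ : (Fin k → ℝ) × (Fin m → ℝ) → ℝ define f = f̄/τ on Q. Suppose (p_j) is a sequence of points of Q at each of which the Fréchet derivative of f vanishes, and p_j converges to a point p = (x̄, ȳ) with ȳ i ≥ 0 for every i and ȳ i₀ = 0 for at least one index i₀. Then f̄(p) = 0, and the Fréchet derivative of f̄ at p vanishes on every vector (u,v) whose components v i vanish for all i with ȳ i = 0; that is, p is a critical point with critical value 0 of the restriction of f̄ to the boundary stratum through p. -/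
open Filter Topology

/-! At an interior critical point of `f̄ / τ` the quotient rule gives
`df̄ = f̄ · dτ / τ = f̄ · ∑ᵢ αᵢ dyᵢ / yᵢ`. Along `pⱼ → p` the coefficient `α_{i₀} / y_{i₀}` blows up
while `df̄(pⱼ)` stays bounded, which forces `f̄(pⱼ) → 0`. On directions tangent to the stratum
the logarithmic derivative `∑ᵢ αᵢ vᵢ / yᵢ` stays bounded, so `df̄(pⱼ)` tends to `0` there. -/

theorem hasFDerivAt_prod_pow {ι : Type*} [Fintype ι] (α : ι → ℕ) {y : ι → ℝ}
    (hy : ∀ i, y i ≠ 0) :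
    HasFDerivAt (fun y : ι → ℝ => ∏ i, y i ^ α i)
      ((∏ i, y i ^ α i) • ∑ i, ((α i : ℝ) / y i) • ContinuousLinearMap.proj (R := ℝ) i) y := by
  classical
  have hfactor (i : ι) : HasFDerivAt (fun y : ι → ℝ => y i ^ α i)
      (((α i : ℝ) * y i ^ (α i - 1)) • ContinuousLinearMap.proj (R := ℝ) i) y :=
    (hasDerivAt_pow (α i) (y i)).comp_hasFDerivAt y (hasFDerivAt_apply i y)
  refine (HasFDerivAt.finsetProd (u := Finset.univ) fun i _ => hfactor i).congr_fderiv ?_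
  rw [Finset.smul_sum]
  refine Finset.sum_congr rfl fun i _ => ?_
  rw [smul_smul, smul_smul, ← Finset.mul_prod_erase _ _ (Finset.mem_univ i)]
  congr 1
  rcases (α i).eq_zero_or_pos with h | h
  · simp [h]
  · rw [pow_sub₀ _ (hy i) h, pow_one]
    field_simp

theorem fderiv_eq_smul_fderiv_of_fderiv_div_eq_zero {𝕜 E : Type*} [NontriviallyNormedField 𝕜]
    [NormedAddCommGroup E] [NormedSpace 𝕜 E] {g τ : E → 𝕜} {q : E}
    (hg : DifferentiableAt 𝕜 g q) (hτ : DifferentiableAt 𝕜 τ q) (hτq : τ q ≠ 0)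
    (hcrit : fderiv 𝕜 (fun x => g x / τ x) q = 0) :
    fderiv 𝕜 g q = (g q / τ q) • fderiv 𝕜 τ q := by
  have hquot : DifferentiableAt 𝕜 (fun x => g x / τ x) q := by fun_prop (disch := exact hτq)
  have hg_eq : (fun x => g x / τ x * τ x) =ᶠ[𝓝 q] g := by
    filter_upwards [hτ.continuousAt.eventually_ne hτq] with x hx
    exact div_mul_cancel₀ _ hx
  rw [((hquot.hasFDerivAt.mul hτ.hasFDerivAt).congr_of_eventuallyEq hg_eq.symm).fderiv, hcrit]
  ext
  simp

theorem fderiv_apply_eq_mul_sum_of_fderiv_div_prod_pow_eq_zero {E ι : Type*}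
    [NormedAddCommGroup E] [NormedSpace ℝ E] [Fintype ι] (α : ι → ℕ) {g : E × (ι → ℝ) → ℝ}
    {q : E × (ι → ℝ)} (hg : DifferentiableAt ℝ g q) (hq : ∀ i, q.2 i ≠ 0)
    (hcrit : fderiv ℝ (fun q => g q / ∏ i, q.2 i ^ α i) q = 0) (u : E) (v : ι → ℝ) :
    fderiv ℝ g q (u, v) = g q * ∑ i, (α i : ℝ) / q.2 i * v i := by
  have hτ := (hasFDerivAt_prod_pow α hq).comp q hasFDerivAt_snd
  have hτq : ∏ i, q.2 i ^ α i ≠ 0 := Finset.prod_ne_zero_iff.2 fun i _ => pow_ne_zero _ (hq i)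
  rw [fderiv_eq_smul_fderiv_of_fderiv_div_eq_zero hg hτ.differentiableAt hτq hcrit, hτ.fderiv]
  simp only [ContinuousLinearMap.comp_apply, Function.comp_apply, FunLike.coe_smul,
    Pi.smul_apply, FunLike.coe_sum, Finset.sum_apply, ContinuousLinearMap.coe_snd',
    ContinuousLinearMap.proj_apply, smul_eq_mul]
  rw [← mul_assoc, div_mul_cancel₀ _ hτq]

theorem tendsto_nhds_zero_of_tendsto_mul_of_tendsto_atTop {β : Type*} {l : Filter β}
    {c b : β → ℝ} {A : ℝ} (hcb : Tendsto (fun j => c j * b j) l (𝓝 A))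
    (hb : Tendsto b l atTop) : Tendsto c l (𝓝 0) := by
  refine (hcb.div_atTop hb).congr' ?_
  filter_upwards [hb.eventually_gt_atTop 0] with j hj
  exact mul_div_cancel_right₀ _ hj.ne'

theorem tendsto_sum_div_mul {β ι : Type*} [Fintype ι] {l : Filter β}
    {y : β → ι → ℝ} {p : ι → ℝ} (hy : Tendsto y l (𝓝 p)) (c : ι → ℝ) {v : ι → ℝ}
    (hv : ∀ i, p i = 0 → v i = 0) :
    Tendsto (fun j => ∑ i, c i / y j i * v i) l (𝓝 (∑ i, c i / p i * v i)) := by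
  refine tendsto_finsetSum _ fun i _ => ?_
  by_cases hpi : p i = 0
  · simpa [hv i hpi] using tendsto_const_nhds
  · exact (tendsto_const_nhds.div (tendsto_pi_nhds.1 hy i) hpi).mul_const _

theorem limit_of_critical_points_is_critical_at_infinity_general
    (k m : ℕ) (α : Fin m → ℕ) (hα : ∀ i, 1 ≤ α i)
    (fbar : (Fin k → ℝ) × (Fin m → ℝ) → ℝ) (hfbar : ContDiff ℝ 1 fbar)
    (pseq : ℕ → (Fin k → ℝ) × (Fin m → ℝ))
    (hQ : ∀ j, ∀ i, 0 < (pseq j).2 i)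
    (hcrit : ∀ j,
      fderiv ℝ (fun q => fbar q / ∏ i, (q.2 i) ^ (α i)) (pseq j) = 0)
    (p : (Fin k → ℝ) × (Fin m → ℝ))
    (hlim : Tendsto pseq atTop (nhds p))
    (i₀ : Fin m) (hy0 : p.2 i₀ = 0) :
    fbar p = 0 ∧
      ∀ (u : Fin k → ℝ) (v : Fin m → ℝ),
        (∀ i, p.2 i = 0 → v i = 0) → fderiv ℝ fbar p (u, v) = 0 := by
  have hD (j) := fderiv_apply_eq_mul_sum_of_fderiv_div_prod_pow_eq_zero α
    (hfbar.differentiable one_ne_zero _) (fun i => (hQ j i).ne') (hcrit j)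
  have hfbar_lim : Tendsto (fun j => fbar (pseq j)) atTop (𝓝 (fbar p)) :=
    (hfbar.continuous.tendsto p).comp hlim
  have hD_lim (w) : Tendsto (fun j => fderiv ℝ fbar (pseq j) w) atTop (𝓝 (fderiv ℝ fbar p w)) :=
    ((hfbar.continuous_fderiv one_ne_zero).clm_apply continuous_const).tendsto p |>.comp hlim
  have hy_lim : Tendsto (fun j => (pseq j).2) atTop (𝓝 p.2) := (continuous_snd.tendsto p).comp hlim
  have hp : fbar p = 0 := by
    have hy₀ : Tendsto (fun j => (pseq j).2 i₀) atTop (𝓝[>] 0) :=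
      tendsto_nhdsWithin_iff.2 ⟨hy0 ▸ tendsto_pi_nhds.1 hy_lim i₀, .of_forall fun j => hQ j i₀⟩
    have hblow : Tendsto (fun j => (α i₀ : ℝ) / (pseq j).2 i₀) atTop atTop :=
      (tendsto_inv_nhdsGT_zero.comp hy₀).const_mul_atTop (by exact_mod_cast hα i₀)
    have hbdd := hD_lim (0, Pi.single i₀ 1)
    simp only [hD, Pi.single_apply, mul_ite, mul_one, mul_zero, Finset.sum_ite_eq',
      Finset.mem_univ, if_true] at hbdd
    exact tendsto_nhds_unique hfbar_lim
      (tendsto_nhds_zero_of_tendsto_mul_of_tendsto_atTop hbdd hblow)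
  refine ⟨hp, fun u v hv => tendsto_nhds_unique (hD_lim (u, v)) ?_⟩
  simpa [hD, hp] using hfbar_lim.mul (tendsto_sum_div_mul hy_lim (fun i => (α i : ℝ)) hv)

/-- Limits of critical points of `f = f̄/τ` in a corner chart are critical points
at infinity of `f̄` (with critical value 0) for the boundary stratum. -/
theorem limit_of_critical_points_is_critical_at_infinity
    (k m : ℕ) (α : Fin m → ℕ) (hα : ∀ i, 1 ≤ α i)
    (fbar : (Fin k → ℝ) × (Fin m → ℝ) → ℝ) (hfbar : ContDiff ℝ 1 fbar)
    (pseq : ℕ → (Fin k → ℝ) × (Fin m → ℝ))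
    (hQ : ∀ j, ∀ i, 0 < (pseq j).2 i)
    (hcrit : ∀ j,
      fderiv ℝ (fun q => fbar q / ∏ i, (q.2 i) ^ (α i)) (pseq j) = 0)
    (p : (Fin k → ℝ) × (Fin m → ℝ))
    (hlim : Tendsto pseq atTop (nhds p))
    (hy : ∀ i, 0 ≤ p.2 i) (i₀ : Fin m) (hy0 : p.2 i₀ = 0) :
    fbar p = 0 ∧
      ∀ (u : Fin k → ℝ) (v : Fin m → ℝ),
        (∀ i, p.2 i = 0 → v i = 0) → fderiv ℝ fbar p (u, v) = 0 :=
  limit_of_critical_points_is_critical_at_infinity_general k m α hα fbar hfbar pseq hQ hcrit p hlim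
    i₀ hy0
end

section
/- Let k, m be natural numbers and α : Fin m → ℕ with α i ≥ 1 for all i. On the open quadrant Q = {(x,y) ∈ (Fin k → ℝ) × (Fin m → ℝ) : y i > 0 for all i} let f̄ : (Fin k → ℝ) × (Fin m → ℝ) → ℝ be C¹. Suppose (p_j) is a sequence in Q converging to a point p = (x̄, ȳ) with ȳ i ≥ 0 for every i and ȳ i₀ = 0 for at least one index i₀, and suppose that along the sequence the logarithmic components of τ·d(f̄/τ) tend to zero, namely: ∂f̄/∂x_a(p_j) → 0 for every a ∈ Fin k, and (y i)(p_j)·(∂f̄/∂y_i)(p_j) − (α i)·f̄(p_j) → 0 for every i ∈ Fin m. Then f̄(p) = 0 and the Fréchet derivative of f̄ at p vanishes on every vector (u,v) whose components v i vanish for all i with ȳ i = 0; that is, p is a critical point with critical value 0 of the restriction of f̄ to the boundary stratum through p. -/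
/-!
Pass to the limit in the hypotheses: since `f̄` is `C¹`, the derivative of `f̄` along the
sequence converges to its derivative at `p`. Hence `∂ₓf̄(p) = 0` and
`ȳᵢ ∂_{yᵢ}f̄(p) = αᵢ f̄(p)` for every `i`. At an index with `ȳᵢ = 0` this forces `f̄(p) = 0`,
and then `∂_{yᵢ}f̄(p) = 0` wherever `ȳᵢ ≠ 0`; a linear map killing these coordinate vectors
kills every vector tangent to the stratum.
-/

open Filter Topology

theorem ContDiff.tendsto_fderiv_apply {E F : Type*} [NormedAddCommGroup E] [NormedSpace ℝ E]
    [NormedAddCommGroup F] [NormedSpace ℝ F] {f : E → F} (hf : ContDiff ℝ 1 f)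
    {ι : Type*} {l : Filter ι} {x : ι → E} {p : E} (hx : Tendsto x l (𝓝 p)) (w : E) :
    Tendsto (fun j => fderiv ℝ f (x j) w) l (𝓝 (fderiv ℝ f p w)) :=
  ((ContinuousLinearMap.apply ℝ F w).continuous.tendsto _).comp
    (((hf.continuous_fderiv one_ne_zero).tendsto p).comp hx)

theorem Prod.mk_eq_sum_single {ι κ R : Type*} [Fintype ι] [Fintype κ] [DecidableEq ι]
    [DecidableEq κ] [Semiring R] (u : ι → R) (v : κ → R) :
    (u, v) = ∑ a, u a • ((Pi.single a 1, 0) : (ι → R) × (κ → R))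
      + ∑ i, v i • ((0, Pi.single i 1) : (ι → R) × (κ → R)) := by
  ext <;> simp [Prod.fst_sum, Prod.snd_sum, Finset.sum_apply, Pi.single_apply]

theorem LinearMap.map_prod_eq_zero_of_single {ι κ R M : Type*} [Fintype ι] [Fintype κ]
    [DecidableEq ι] [DecidableEq κ] [Semiring R] [AddCommMonoid M] [Module R M]
    (L : (ι → R) × (κ → R) →ₗ[R] M) {u : ι → R} {v : κ → R}
    (hu : ∀ a, L (Pi.single a 1, 0) = 0) (hv : ∀ i, v i = 0 ∨ L (0, Pi.single i 1) = 0) :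
    L (u, v) = 0 := by
  rw [Prod.mk_eq_sum_single u v, map_add, map_sum, map_sum,
    Finset.sum_eq_zero fun a _ => by rw [map_smul, hu, smul_zero], zero_add]
  refine Finset.sum_eq_zero fun i _ => ?_
  rcases hv i with hvi | hLi
  · rw [hvi, zero_smul, map_zero]
  · rw [map_smul, hLi, smul_zero]

theorem limit_of_palais_smale_sequence_is_critical_at_infinity_general
    (k m : ℕ) (α : Fin m → ℕ) (hα : ∀ i, 1 ≤ α i)
    (fbar : (Fin k → ℝ) × (Fin m → ℝ) → ℝ) (hfbar : ContDiff ℝ 1 fbar)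
    (pseq : ℕ → (Fin k → ℝ) × (Fin m → ℝ))
    (hx : ∀ a : Fin k,
      Tendsto (fun j => fderiv ℝ fbar (pseq j) (Pi.single a 1, 0)) atTop (nhds 0))
    (hyi : ∀ i : Fin m,
      Tendsto (fun j =>
          (pseq j).2 i * fderiv ℝ fbar (pseq j) (0, Pi.single i 1)
            - (α i : ℝ) * fbar (pseq j)) atTop (nhds 0))
    (p : (Fin k → ℝ) × (Fin m → ℝ))
    (hlim : Tendsto pseq atTop (nhds p))
    (i₀ : Fin m) (hy0 : p.2 i₀ = 0) :
    fbar p = 0 ∧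
      ∀ (u : Fin k → ℝ) (v : Fin m → ℝ),
        (∀ i, p.2 i = 0 → v i = 0) → fderiv ℝ fbar p (u, v) = 0 := by
  have hdx (a : Fin k) : fderiv ℝ fbar p (Pi.single a 1, 0) = 0 :=
    tendsto_nhds_unique (hfbar.tendsto_fderiv_apply hlim _) (hx a)
  have hdy (i : Fin m) :
      p.2 i * fderiv ℝ fbar p (0, Pi.single i 1) - α i * fbar p = 0 := by
    have hyj : Tendsto (fun j => (pseq j).2 i) atTop (𝓝 (p.2 i)) :=
      (((continuous_apply i).comp continuous_snd).tendsto p).comp hlim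
    exact tendsto_nhds_unique ((hyj.mul (hfbar.tendsto_fderiv_apply hlim _)).sub
      (tendsto_const_nhds.mul ((hfbar.continuous.tendsto p).comp hlim))) (hyi i)
  have hf : fbar p = 0 := by
    have hα₀ : (α i₀ : ℝ) ≠ 0 := Nat.cast_ne_zero.mpr (Nat.one_le_iff_ne_zero.mp (hα i₀))
    simpa [hy0, hα₀] using hdy i₀
  refine ⟨hf, fun u v hv => ?_⟩
  refine (fderiv ℝ fbar p).toLinearMap.map_prod_eq_zero_of_single hdx fun i => ?_
  by_cases hyi₀ : p.2 i = 0
  · exact .inl (hv i hyi₀)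
  · exact .inr (by simpa [hf, hyi₀] using hdy i)

/-- If the logarithmic components of `τ·d(f̄/τ)` tend to zero along a sequence in
the open quadrant converging to a boundary point, the limit is a critical point
at infinity of `f̄` with critical value 0. -/
theorem limit_of_palais_smale_sequence_is_critical_at_infinity
    (k m : ℕ) (α : Fin m → ℕ) (hα : ∀ i, 1 ≤ α i)
    (fbar : (Fin k → ℝ) × (Fin m → ℝ) → ℝ) (hfbar : ContDiff ℝ 1 fbar)
    (pseq : ℕ → (Fin k → ℝ) × (Fin m → ℝ))
    (hQ : ∀ j, ∀ i, 0 < (pseq j).2 i)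
    (hx : ∀ a : Fin k,
      Tendsto (fun j => fderiv ℝ fbar (pseq j) (Pi.single a 1, 0)) atTop (nhds 0))
    (hyi : ∀ i : Fin m,
      Tendsto (fun j =>
          (pseq j).2 i * fderiv ℝ fbar (pseq j) (0, Pi.single i 1)
            - (α i : ℝ) * fbar (pseq j)) atTop (nhds 0))
    (p : (Fin k → ℝ) × (Fin m → ℝ))
    (hlim : Tendsto pseq atTop (nhds p))
    (hy : ∀ i, 0 ≤ p.2 i) (i₀ : Fin m) (hy0 : p.2 i₀ = 0) :
    fbar p = 0 ∧
      ∀ (u : Fin k → ℝ) (v : Fin m → ℝ),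
        (∀ i, p.2 i = 0 → v i = 0) → fderiv ℝ fbar p (u, v) = 0 :=
  limit_of_palais_smale_sequence_is_critical_at_infinity_general k m α hα fbar hfbar pseq hx hyi p
    hlim i₀ hy0
end

section
/- Let E be a real Hilbert space and f : ℝ × E → ℝ a C¹ function. For s ∈ ℝ write ∇f_s for the gradient of the function f(s,·) : E → ℝ, and write ∂_s f(s,x) for the derivative of the function t ↦ f(t,x) at t = s. Let x : ℝ → E be a C¹ curve with derivative x'. Then for all real numbers s₁ ≤ s₂ one has the energy identity ∫_{s₁}^{s₂} ( ‖x'(s)‖² + ‖∇f_s(x(s))‖² − 2·∂_s f(s, x(s)) ) ds = 2·( f(s₁, x(s₁)) − f(s₂, x(s₂)) ) + ∫_{s₁}^{s₂} ‖ x'(s) + ∇f_s(x(s)) ‖² ds. -/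
/-!
Along the curve, `φ(s) = f(s, x(s))` has derivative `∂_s f(s, x(s)) + ⟪∇f_s(x(s)), x'(s)⟫`
by the chain rule. Expanding `‖x' + ∇f_s‖²` therefore turns the left-hand integrand into
`‖x' + ∇f_s(x)‖² - 2 φ'`, and the fundamental theorem of calculus integrates `φ'`.
-/

open MeasureTheory InnerProductSpace
open scoped RealInnerProductSpace

section PartialDerivatives

variable {E : Type*} [NormedAddCommGroup E] [InnerProductSpace ℝ E]
  {f : ℝ × E → ℝ} {L : (ℝ × E) →L[ℝ] ℝ}

theorem HasFDerivAt.hasDerivAt_comp_prodMk {x : ℝ → E} {v : E} {s : ℝ}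
    (hf : HasFDerivAt f L (s, x s)) (hx : HasDerivAt x v s) :
    HasDerivAt (fun t => f (t, x t)) (L (1, v)) s :=
  hf.comp_hasDerivAt s ((hasDerivAt_id s).prodMk hx)

theorem HasFDerivAt.deriv_comp_prodMk_left {s : ℝ} {y : E} (hf : HasFDerivAt f L (s, y)) :
    deriv (fun t => f (t, y)) s = L (1, 0) :=
  (hf.hasDerivAt_comp_prodMk (x := fun _ => y) (hasDerivAt_const s y)).deriv

variable [CompleteSpace E]

theorem HasFDerivAt.gradient_comp_prodMk_right {s : ℝ} {y : E} (hf : HasFDerivAt f L (s, y)) :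
    gradient (fun z => f (s, z)) y = (toDual ℝ E).symm (L.comp (.inr ℝ ℝ E)) :=
  (hasFDerivAt_iff_hasGradientAt.mp (hf.comp y (hasFDerivAt_prodMk_right s y))).gradient

theorem ContDiff.continuous_gradient_comp_prodMk_right (hf : ContDiff ℝ 1 f) {x : ℝ → E}
    (hx : Continuous x) : Continuous fun s => gradient (fun y => f (s, y)) (x s) := by
  have hD : Continuous fun s => fderiv ℝ f (s, x s) :=
    (hf.continuous_fderiv one_ne_zero).comp (continuous_id.prodMk hx)
  simp_rw [fun s => ((hf.differentiable one_ne_zero (s, x s)).hasFDerivAt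
    |>.gradient_comp_prodMk_right)]
  exact (toDual ℝ E).symm.continuous.comp
    (((ContinuousLinearMap.compL ℝ E (ℝ × E) ℝ).continuous.comp hD).clm_apply continuous_const)

theorem HasFDerivAt.norm_sq_add_norm_gradient_sq_sub_deriv {s : ℝ} {y : E}
    (hf : HasFDerivAt f L (s, y)) (v : E) :
    ‖v‖ ^ 2 + ‖gradient (fun z => f (s, z)) y‖ ^ 2 - 2 * deriv (fun t => f (t, y)) s
      = ‖v + gradient (fun z => f (s, z)) y‖ ^ 2 - 2 * L (1, v) := by
  have hsplit : L (1, v) = L (1, 0) + ⟪v, gradient (fun z => f (s, z)) y⟫ := by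
    rw [hf.gradient_comp_prodMk_right, real_inner_comm, toDual_symm_apply,
      ContinuousLinearMap.comp_apply, ContinuousLinearMap.inr_apply, ← map_add]
    simp
  rw [hf.deriv_comp_prodMk_left, hsplit, norm_add_sq_real]
  ring

end PartialDerivatives

theorem energy_identity_general
    {E : Type*} [NormedAddCommGroup E] [InnerProductSpace ℝ E] [CompleteSpace E]
    (f : ℝ × E → ℝ) (hf : ContDiff ℝ 1 f)
    (x : ℝ → E) (x' : ℝ → E)
    (hx : ∀ s, HasDerivAt x (x' s) s) (hx' : Continuous x')
    (s₁ s₂ : ℝ) :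
    ∫ s in s₁..s₂,
        (‖x' s‖ ^ 2 + ‖gradient (fun y => f (s, y)) (x s)‖ ^ 2
          - 2 * deriv (fun t => f (t, x s)) s)
      = 2 * (f (s₁, x s₁) - f (s₂, x s₂))
        + ∫ s in s₁..s₂, ‖x' s + gradient (fun y => f (s, y)) (x s)‖ ^ 2 := by
  have hxc : Continuous x := continuous_iff_continuousAt.2 fun s => (hx s).continuousAt
  have hDf : ∀ s, HasFDerivAt f (fderiv ℝ f (s, x s)) (s, x s) := fun s =>
    (hf.differentiable one_ne_zero _).hasFDerivAt
  have hφ' : Continuous fun s => fderiv ℝ f (s, x s) (1, x' s) :=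
    ((hf.continuous_fderiv one_ne_zero).comp (continuous_id.prodMk hxc)).clm_apply
      (continuous_const.prodMk hx')
  have hdefect : Continuous fun s => ‖x' s + gradient (fun y => f (s, y)) (x s)‖ ^ 2 :=
    (hx'.add (hf.continuous_gradient_comp_prodMk_right hxc)).norm.pow 2
  rw [intervalIntegral.integral_congr fun s _ =>
      (hDf s).norm_sq_add_norm_gradient_sq_sub_deriv (x' s),
    intervalIntegral.integral_sub (hdefect.intervalIntegrable _ _)
      ((hφ'.intervalIntegrable _ _).const_mul 2),
    intervalIntegral.integral_const_mul,
    intervalIntegral.integral_eq_sub_of_hasDerivAt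
      (fun s _ => (hDf s).hasDerivAt_comp_prodMk (hx s)) (hφ'.intervalIntegrable _ _)]
  ring

/-- The finite-interval energy identity: the analytic energy of a curve equals the
topological energy plus the `L²` defect of the time-dependent negative gradient
flow equation. -/
theorem energy_identity
    {E : Type*} [NormedAddCommGroup E] [InnerProductSpace ℝ E] [CompleteSpace E]
    (f : ℝ × E → ℝ) (hf : ContDiff ℝ 1 f)
    (x : ℝ → E) (x' : ℝ → E)
    (hx : ∀ s, HasDerivAt x (x' s) s) (hx' : Continuous x')
    (s₁ s₂ : ℝ) (hs : s₁ ≤ s₂) :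
    ∫ s in s₁..s₂,
        (‖x' s‖ ^ 2 + ‖gradient (fun y => f (s, y)) (x s)‖ ^ 2
          - 2 * deriv (fun t => f (t, x s)) s)
      = 2 * (f (s₁, x s₁) - f (s₂, x s₂))
        + ∫ s in s₁..s₂, ‖x' s + gradient (fun y => f (s, y)) (x s)‖ ^ 2 :=
  energy_identity_general f hf x x' hx hx' s₁ s₂
end

section
/- Let E be a real Hilbert space and f : ℝ × E → ℝ a C¹ function. Write ∇f_s for the gradient of f(s,·) and ∂_s f for the partial derivative in the first variable. Suppose there is R > 0 such that f(s,·) = f(−R,·) for all s ≤ −R and f(s,·) = f(R,·) for all s ≥ R. Let x : ℝ → E be a C¹ curve solving the time-dependent negative gradient flow x'(s) = −∇f_s(x(s)) for all s, such that x(s) converges to a point x₋ as s → −∞ and to a point x₊ as s → +∞, and such that s ↦ ‖x'(s)‖² and s ↦ ∂_s f(s, x(s)) are integrable on ℝ. Then ∫_ℝ ( ‖x'(s)‖² + ‖∇f_s(x(s))‖² − 2·∂_s f(s, x(s)) ) ds = 2·( f(−R, x₋) − f(R, x₊) ). -/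
open Filter MeasureTheory Topology
open scoped InnerProductSpace

/-!
Along the flow, `d/ds f(s, x s) = ∂ₛf(s, x s) - ‖x' s‖²` and `‖∇fₛ(x s)‖ = ‖x' s‖`, so the
integrand is `-2 · d/ds f(s, x s)`. Since `f(s, ·)` is frozen outside `[-R, R]`,
`f(s, x s)` tends to `f(∓R, x∓)` at `∓∞`, and the fundamental theorem of calculus on `ℝ`
gives the value.
-/

theorem tendsto_comp_graph_of_eventually_eq {α X Y : Type*} [TopologicalSpace X]
    [TopologicalSpace Y] {f : α × X → Y} {x : α → X} {l : Filter α} {a : α} {p : X}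
    (hf : ContinuousAt (fun y => f (a, y)) p) (hx : Tendsto x l (𝓝 p))
    (hfrozen : ∀ᶠ s in l, f (s, x s) = f (a, x s)) :
    Tendsto (fun s => f (s, x s)) l (𝓝 (f (a, p))) :=
  (hf.tendsto.comp hx).congr' (hfrozen.mono fun _ hs => hs.symm)

theorem DifferentiableAt.hasDerivAt_comp_graph {E : Type*} [NormedAddCommGroup E]
    [InnerProductSpace ℝ E] [CompleteSpace E] {f : ℝ × E → ℝ} {x : ℝ → E} {v : E} {s : ℝ}
    (hf : DifferentiableAt ℝ f (s, x s)) (hx : HasDerivAt x v s) :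
    HasDerivAt (fun t => f (t, x t))
      (deriv (fun t => f (t, x s)) s + ⟪gradient (fun y => f (s, y)) (x s), v⟫_ℝ) s := by
  set D := fderiv ℝ f (s, x s)
  have hD : HasFDerivAt f D (s, x s) := hf.hasFDerivAt
  have hpartial_time : HasDerivAt (fun t => f (t, x s)) (D (1, 0)) s :=
    hD.comp_hasDerivAt s ((hasDerivAt_id s).prodMk (hasDerivAt_const s (x s)))
  have hpartial_space : HasFDerivAt (fun y => f (s, y))
      (D.comp ((0 : E →L[ℝ] ℝ).prod (ContinuousLinearMap.id ℝ E))) (x s) :=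
    hD.comp (x s) ((hasFDerivAt_const s (x s)).prodMk (hasFDerivAt_id (x s)))
  have hinner : ⟪gradient (fun y => f (s, y)) (x s), v⟫_ℝ = D (0, v) := by
    rw [hpartial_space.hasGradientAt.gradient]
    simp [InnerProductSpace.toDual_symm_apply]
  have hsplit : D (1, v) = D (1, 0) + D (0, v) := by
    rw [← map_add, Prod.mk_add_mk, add_zero, zero_add]
  rw [hpartial_time.deriv, hinner, ← hsplit]
  exact hD.comp_hasDerivAt s ((hasDerivAt_id s).prodMk hx)

theorem analytic_energy_eq_topological_energy_general
    {E : Type*} [NormedAddCommGroup E] [InnerProductSpace ℝ E] [CompleteSpace E]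
    (f : ℝ × E → ℝ) (hf : ContDiff ℝ 1 f)
    (R : ℝ)
    (hleft : ∀ s ≤ -R, ∀ y : E, f (s, y) = f (-R, y))
    (hright : ∀ s ≥ R, ∀ y : E, f (s, y) = f (R, y))
    (x : ℝ → E) (x' : ℝ → E)
    (hx : ∀ s, HasDerivAt x (x' s) s)
    (hflow : ∀ s, x' s = -gradient (fun y => f (s, y)) (x s))
    (xm xp : E)
    (hxm : Tendsto x atBot (nhds xm))
    (hxp : Tendsto x atTop (nhds xp))
    (hint1 : Integrable (fun s => ‖x' s‖ ^ 2))
    (hint2 : Integrable (fun s => deriv (fun t => f (t, x s)) s)) :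
    ∫ s, (‖x' s‖ ^ 2 + ‖gradient (fun y => f (s, y)) (x s)‖ ^ 2
        - 2 * deriv (fun t => f (t, x s)) s)
      = 2 * (f (-R, xm) - f (R, xp)) := by
  have hgrad : ∀ s, gradient (fun y => f (s, y)) (x s) = -x' s := fun s => by
    rw [hflow s, neg_neg]
  have henergy_deriv : ∀ s, HasDerivAt (fun t => f (t, x t))
      (deriv (fun t => f (t, x s)) s - ‖x' s‖ ^ 2) s := fun s => by
    have h := DifferentiableAt.hasDerivAt_comp_graph
      (hf.differentiable one_ne_zero (s, x s)) (hx s)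
    rwa [hgrad s, inner_neg_left, real_inner_self_eq_norm_sq, ← sub_eq_add_neg] at h
  have hcont : ∀ a, Continuous fun y => f (a, y) := fun a =>
    hf.continuous.comp (continuous_const.prodMk continuous_id)
  have hftc := integral_of_hasDerivAt_of_tendsto henergy_deriv (hint2.sub hint1)
    (tendsto_comp_graph_of_eventually_eq (hcont (-R)).continuousAt hxm
      ((eventually_le_atBot (-R)).mono fun s hs => hleft s hs (x s)))
    (tendsto_comp_graph_of_eventually_eq (hcont R).continuousAt hxp
      ((eventually_ge_atTop R).mono fun s hs => hright s hs (x s)))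
  calc ∫ s, (‖x' s‖ ^ 2 + ‖gradient (fun y => f (s, y)) (x s)‖ ^ 2
        - 2 * deriv (fun t => f (t, x s)) s)
      = ∫ s, -2 * (deriv (fun t => f (t, x s)) s - ‖x' s‖ ^ 2) := by
        congr 1 with s
        rw [hgrad s, norm_neg]
        ring
    _ = 2 * (f (-R, xm) - f (R, xp)) := by
        rw [integral_const_mul, hftc]
        ring

/-- For a solution of the time-dependent negative gradient flow converging to
limits at both ends (with the time-dependence constant outside `[-R,R]`), the
analytic energy equals the topological energy
`2·(f(−R, x₋) − f(R, x₊))`. -/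
theorem analytic_energy_eq_topological_energy
    {E : Type*} [NormedAddCommGroup E] [InnerProductSpace ℝ E] [CompleteSpace E]
    (f : ℝ × E → ℝ) (hf : ContDiff ℝ 1 f)
    (R : ℝ) (hR : 0 < R)
    (hleft : ∀ s ≤ -R, ∀ y : E, f (s, y) = f (-R, y))
    (hright : ∀ s ≥ R, ∀ y : E, f (s, y) = f (R, y))
    (x : ℝ → E) (x' : ℝ → E)
    (hx : ∀ s, HasDerivAt x (x' s) s)
    (hflow : ∀ s, x' s = -gradient (fun y => f (s, y)) (x s))
    (xm xp : E)
    (hxm : Tendsto x atBot (nhds xm))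
    (hxp : Tendsto x atTop (nhds xp))
    (hint1 : Integrable (fun s => ‖x' s‖ ^ 2))
    (hint2 : Integrable (fun s => deriv (fun t => f (t, x s)) s)) :
    ∫ s, (‖x' s‖ ^ 2 + ‖gradient (fun y => f (s, y)) (x s)‖ ^ 2
        - 2 * deriv (fun t => f (t, x s)) s)
      = 2 * (f (-R, xm) - f (R, xp)) :=
  analytic_energy_eq_topological_energy_general f hf R hleft hright x x' hx hflow xm xp hxm hxp
    hint1 hint2
end

section
/- Let E be a real normed vector space, U ⊆ E an open set, and τ, f̄ : U → ℝ functions that are differentiable at every point of U, with τ(p) > 0 for all p ∈ U. Let ν : U → E be a map and c ≥ 0 a constant such that for every p ∈ U the derivative of τ at p applied to ν(p) is nonzero, and |D f̄_p(ν(p))| ≤ c·|D τ_p(ν(p))|. For ε ∈ ℝ define f_ε : U → ℝ by f_ε = (f̄ + ε)/τ. Then for every ε ∈ ℝ and every p ∈ U at which the Fréchet derivative of f_ε vanishes, one has |f_ε(p)| ≤ c. -/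
open Filter Topology

section QuotientCriticalPoint

variable {𝕜 E : Type*} [NontriviallyNormedField 𝕜] [NormedAddCommGroup E] [NormedSpace 𝕜 E]
  {g τ h : E → 𝕜} {p : E}

theorem fderiv_eq_smul_of_mul_eventuallyEq_of_fderiv_eq_zero (hg : DifferentiableAt 𝕜 g p)
    (hτ : DifferentiableAt 𝕜 τ p) (hgτ : (fun q => g q * τ q) =ᶠ[𝓝 p] h)
    (hcrit : fderiv 𝕜 g p = 0) :
    fderiv 𝕜 h p = g p • fderiv 𝕜 τ p := by
  rw [← hgτ.fderiv_eq, fderiv_fun_mul hg hτ, hcrit]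
  ext; simp

theorem fderiv_eq_smul_of_fderiv_div_eq_zero (hh : DifferentiableAt 𝕜 h p)
    (hτ : DifferentiableAt 𝕜 τ p) (hτp : τ p ≠ 0)
    (hcrit : fderiv 𝕜 (fun q => h q / τ q) p = 0) :
    fderiv 𝕜 h p = (h p / τ p) • fderiv 𝕜 τ p := by
  have hdiv_mul : (fun q => h q / τ q * τ q) =ᶠ[𝓝 p] h :=
    (hτ.continuousAt.eventually_ne hτp).mono fun q hq => div_mul_cancel₀ (h q) hq
  have hdiv : DifferentiableAt 𝕜 (fun q => h q / τ q) p := by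
    simpa only [div_eq_mul_inv] using hh.fun_mul (hτ.fun_inv hτp)
  exact fderiv_eq_smul_of_mul_eventuallyEq_of_fderiv_eq_zero hdiv hτ hdiv_mul hcrit

end QuotientCriticalPoint

theorem critical_values_bounded_general
    {E : Type*} [NormedAddCommGroup E] [NormedSpace ℝ E]
    (U : Set E)
    (τ fbar : E → ℝ)
    (hτdiff : ∀ p ∈ U, DifferentiableAt ℝ τ p)
    (hfdiff : ∀ p ∈ U, DifferentiableAt ℝ fbar p)
    (hτpos : ∀ p ∈ U, 0 < τ p)
    (ν : E → E) (c : ℝ)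
    (hν : ∀ p ∈ U, fderiv ℝ τ p (ν p) ≠ 0)
    (hest : ∀ p ∈ U, |fderiv ℝ fbar p (ν p)| ≤ c * |fderiv ℝ τ p (ν p)|) :
    ∀ (ε : ℝ), ∀ p ∈ U,
      fderiv ℝ (fun q => (fbar q + ε) / τ q) p = 0 →
      |(fbar p + ε) / τ p| ≤ c := by
  intro ε p hp hcrit
  have hslope : fderiv ℝ fbar p (ν p) = (fbar p + ε) / τ p * fderiv ℝ τ p (ν p) := by
    have h := fderiv_eq_smul_of_fderiv_div_eq_zero ((hfdiff p hp).add_const ε) (hτdiff p hp)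
      (hτpos p hp).ne' hcrit
    rw [fderiv_add_const] at h
    exact DFunLike.congr_fun h (ν p)
  refine le_of_mul_le_mul_right ?_ (abs_pos.mpr (hν p hp))
  rw [← abs_mul, ← hslope]
  exact hest p hp

/-- Bound on critical values of the perturbations `f_ε = (f̄ + ε)/τ`: if there
is a vector field `ν` with `∂_ν τ ≠ 0` and `|∂_ν f̄| ≤ c·|∂_ν τ|` on `U`, then
every critical point `p ∈ U` of `f_ε` satisfies `|f_ε(p)| ≤ c`. -/
theorem critical_values_bounded
    {E : Type*} [NormedAddCommGroup E] [NormedSpace ℝ E]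
    (U : Set E) (hU : IsOpen U)
    (τ fbar : E → ℝ)
    (hτdiff : ∀ p ∈ U, DifferentiableAt ℝ τ p)
    (hfdiff : ∀ p ∈ U, DifferentiableAt ℝ fbar p)
    (hτpos : ∀ p ∈ U, 0 < τ p)
    (ν : E → E) (c : ℝ) (hc : 0 ≤ c)
    (hν : ∀ p ∈ U, fderiv ℝ τ p (ν p) ≠ 0)
    (hest : ∀ p ∈ U, |fderiv ℝ fbar p (ν p)| ≤ c * |fderiv ℝ τ p (ν p)|) :
    ∀ (ε : ℝ), ∀ p ∈ U,
      fderiv ℝ (fun q => (fbar q + ε) / τ q) p = 0 →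
      |(fbar p + ε) / τ p| ≤ c :=
  critical_values_bounded_general U τ fbar hτdiff hfdiff hτpos ν c hν hest
end
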